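/- arXiv:2503.05717 — 3 statements merged into one kernel-verified Lean document; each statement's English description precedes it below -/
import Mathlib

section
/- Unique solvability of the strain in terms of the stress: let E > 0, ν ∈ (−1, 1/2), β ∈ ℝ, and let T be a real symmetric 3×3 matrix with β(1 − 2ν) tr T ≠ E. Then there exists a unique real symmetric 3×3 matrix ε with 1 + β tr ε ≠ 0 satisfying the density-dependent constitutive relation ε = C₁(1 + β tr ε) T + C₂(1 + β tr ε)(tr T) I₃; it is given explicitly by ε = (E/(E − β(1 − 2ν) tr T)) (C₁ T + C₂ (tr T) I₃), and its trace satisfies tr ε = (1 − 2ν) tr T / (E − β(1 − 2ν) tr T). -/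
open Matrix

/-!
The relation says `ε = (1 + β tr ε) • A` for the fixed matrix `A = C₁ T + C₂ (tr T) I₃`, whose
trace is `(1 - 2ν) tr T / E`. Applying the trace gives `(1 + β tr ε)(1 - β tr A) = 1`, so the scalar
`1 + β tr ε` is forced to be `(1 - β tr A)⁻¹ = E / (E - β (1 - 2ν) tr T)`, and with it `ε` itself.
Nothing but linearity of the trace is involved.
-/

namespace LinearMap

variable {K M : Type*} [Field K] [AddCommGroup M] [Module K M] (f : M →ₗ[K] K) (β : K) {a x : M}

theorem one_add_mul_apply_mul_one_sub_eq_one (h : x = (1 + β * f x) • a) :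
    (1 + β * f x) * (1 - β * f a) = 1 := by
  have hfx : f x = (1 + β * f x) * f a := by
    simpa only [map_smul, smul_eq_mul] using congrArg f h
  linear_combination β * hfx

theorem one_add_mul_apply_inv_smul (hβ : 1 - β * f a ≠ 0) :
    1 + β * f ((1 - β * f a)⁻¹ • a) = (1 - β * f a)⁻¹ := by
  rw [map_smul, smul_eq_mul]
  field_simp
  ring

theorem eq_one_add_mul_apply_smul_iff (hβ : 1 - β * f a ≠ 0) :
    x = (1 + β * f x) • a ↔ x = (1 - β * f a)⁻¹ • a := by
  constructor
  · intro h
    rwa [eq_inv_of_mul_eq_one_left (f.one_add_mul_apply_mul_one_sub_eq_one β h)] at h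
  · rintro rfl
    rw [f.one_add_mul_apply_inv_smul β hβ]

end LinearMap

theorem Matrix.trace_compliance (E ν : ℝ) (T : Matrix (Fin 3) (Fin 3) ℝ) :
    (((1 + ν) / E) • T + ((-ν / E) * T.trace) • (1 : Matrix (Fin 3) (Fin 3) ℝ)).trace
      = (1 - 2 * ν) * T.trace / E := by
  simp only [trace_add, trace_smul, trace_one, Fintype.card_fin, smul_eq_mul]
  ring

theorem unique_strain_from_stress_general (E ν β : ℝ) (hE : 0 < E)
    (T : Matrix (Fin 3) (Fin 3) ℝ) (hT : T.IsSymm)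
    (hden : β * (1 - 2 * ν) * T.trace ≠ E) :
    (∃! ε : Matrix (Fin 3) (Fin 3) ℝ, ε.IsSymm ∧ 1 + β * ε.trace ≠ 0 ∧
      ε = ((1 + ν) / E * (1 + β * ε.trace)) • T
          + ((-ν / E) * (1 + β * ε.trace) * T.trace) • (1 : Matrix (Fin 3) (Fin 3) ℝ)) ∧
    (∀ ε : Matrix (Fin 3) (Fin 3) ℝ,
      (ε.IsSymm ∧ 1 + β * ε.trace ≠ 0 ∧
        ε = ((1 + ν) / E * (1 + β * ε.trace)) • T
            + ((-ν / E) * (1 + β * ε.trace) * T.trace) • (1 : Matrix (Fin 3) (Fin 3) ℝ)) →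
      ε = (E / (E - β * (1 - 2 * ν) * T.trace)) •
            (((1 + ν) / E) • T + ((-ν / E) * T.trace) • (1 : Matrix (Fin 3) (Fin 3) ℝ)) ∧
      ε.trace = (1 - 2 * ν) * T.trace / (E - β * (1 - 2 * ν) * T.trace)) := by
  have htrA := trace_compliance E ν T
  set A := ((1 + ν) / E) • T + ((-ν / E) * T.trace) • (1 : Matrix (Fin 3) (Fin 3) ℝ)
  set D := E - β * (1 - 2 * ν) * T.trace with hD_def
  have hD : D ≠ 0 := sub_ne_zero.mpr hden.symm
  have hcoef : 1 - β * A.trace = D / E := by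
    rw [htrA, hD_def]
    field_simp
  have hβA : 1 - β * A.trace ≠ 0 := hcoef ▸ div_ne_zero hD hE.ne'
  have hscalar : (1 - β * A.trace)⁻¹ = E / D := by rw [hcoef, inv_div]
  have hsmul : ∀ s : ℝ,
      ((1 + ν) / E * s) • T + ((-ν / E) * s * T.trace) • (1 : Matrix (Fin 3) (Fin 3) ℝ) = s • A :=
    fun s => by module
  have hrel : ∀ ε : Matrix (Fin 3) (Fin 3) ℝ,
      ε = ((1 + ν) / E * (1 + β * ε.trace)) • T + ((-ν / E) * (1 + β * ε.trace) * T.trace) • 1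
        ↔ ε = (E / D) • A := fun ε => by
    rw [hsmul, ← hscalar]
    exact (traceLinearMap (Fin 3) ℝ ℝ).eq_one_add_mul_apply_smul_iff β hβA
  have hne : 1 + β * ((E / D) • A).trace ≠ 0 := by
    rw [← hscalar]
    exact ((traceLinearMap (Fin 3) ℝ ℝ).one_add_mul_apply_inv_smul β hβA).trans_ne (inv_ne_zero hβA)
  have htr : ((E / D) • A).trace = (1 - 2 * ν) * T.trace / D := by
    rw [trace_smul, htrA, smul_eq_mul]
    field_simp
  have hA : A.IsSymm := (hT.smul _).add (isSymm_one.smul _)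
  refine ⟨⟨_, ⟨hA.smul _, hne, (hrel _).2 rfl⟩, fun ε hε => (hrel ε).1 hε.2.2⟩, fun ε hε => ?_⟩
  obtain rfl := (hrel ε).1 hε.2.2
  exact ⟨rfl, htr⟩

/-- Unique solvability of the strain in terms of the stress for the density-dependent
constitutive relation `ε = C₁(1 + β tr ε) T + C₂(1 + β tr ε)(tr T) I₃` with
`C₁ = (1+ν)/E`, `C₂ = −ν/E`: if `β (1 − 2ν) tr T ≠ E`, there is a unique symmetric `ε`
with `1 + β tr ε ≠ 0` satisfying the relation; it is given explicitly by
`ε = (E/(E − β(1−2ν) tr T)) (C₁ T + C₂ (tr T) I₃)`, and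
`tr ε = (1 − 2ν) tr T / (E − β(1−2ν) tr T)`. -/
theorem unique_strain_from_stress (E ν β : ℝ) (hE : 0 < E)
    (hν₁ : -1 < ν) (hν₂ : ν < 1 / 2)
    (T : Matrix (Fin 3) (Fin 3) ℝ) (hT : T.IsSymm)
    (hden : β * (1 - 2 * ν) * T.trace ≠ E) :
    (∃! ε : Matrix (Fin 3) (Fin 3) ℝ, ε.IsSymm ∧ 1 + β * ε.trace ≠ 0 ∧
      ε = ((1 + ν) / E * (1 + β * ε.trace)) • T
          + ((-ν / E) * (1 + β * ε.trace) * T.trace) • (1 : Matrix (Fin 3) (Fin 3) ℝ)) ∧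
    (∀ ε : Matrix (Fin 3) (Fin 3) ℝ,
      (ε.IsSymm ∧ 1 + β * ε.trace ≠ 0 ∧
        ε = ((1 + ν) / E * (1 + β * ε.trace)) • T
            + ((-ν / E) * (1 + β * ε.trace) * T.trace) • (1 : Matrix (Fin 3) (Fin 3) ℝ)) →
      ε = (E / (E - β * (1 - 2 * ν) * T.trace)) •
            (((1 + ν) / E) • T + ((-ν / E) * T.trace) • (1 : Matrix (Fin 3) (Fin 3) ℝ)) ∧
      ε.trace = (1 - 2 * ν) * T.trace / (E - β * (1 - 2 * ν) * T.trace)) :=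
  unique_strain_from_stress_general E ν β hE T hT hden
end

section
/- Let E > 0, ν ∈ (−1, 1/2), and β ∈ ℝ. The stress map ε ↦ 𝔼[ε]/(1 + β tr ε) is a bijection from the set {ε : ε real symmetric 3×3, 1 + β tr ε ≠ 0} onto the set {T : T real symmetric 3×3, β(1 − 2ν) tr T ≠ E}. -/
/-!
Write `𝔼 ε = 2μ ε + λ (tr ε) I` with `2μ = E/(1+ν)` and `λ = νE/((1-2ν)(1+ν))`. Since `2μ ≠ 0`
and `2μ + 3λ = E/(1-2ν) =: k ≠ 0`, `𝔼` is invertible on symmetric matrices and multiplies the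
trace by `k`. For `T = 𝔼 ε / (1 + β tr ε)` this gives `k - β tr T = k / (1 + β tr ε)`, so `T`
avoids the hyperplane `β tr T = k` and determines the scale factor `1 + β tr ε`, hence `ε`.
Conversely, `T` with `β tr T ≠ k` is the image of `ε = 𝔼⁻¹ T / (1 - β tr T / k)`.
-/

open Matrix

/-- The fourth-order elasticity tensor:
`𝔼[ε] = (E/(1+ν)) ε + (ν E/((1−2ν)(1+ν))) (tr ε) I₃`. -/
noncomputable def elasticityTensor (E ν : ℝ) (ε : Matrix (Fin 3) (Fin 3) ℝ) :
    Matrix (Fin 3) (Fin 3) ℝ :=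
  (E / (1 + ν)) • ε + (ν * E / ((1 - 2 * ν) * (1 + ν)) * ε.trace) • (1 : Matrix (Fin 3) (Fin 3) ℝ)

namespace Matrix

section

variable (n : Type*) (R : Type*) [Semiring R]

def symmetricSubmodule : Submodule R (Matrix n n R) where
  carrier := {A | A.IsSymm}
  add_mem' := IsSymm.add
  zero_mem' := isSymm_zero
  smul_mem' c _ hA := hA.smul c

end

section

variable {n K : Type*} [Fintype n] [DecidableEq n] [Field K]

def isotropicMap (a b : K) : Matrix n n K →ₗ[K] Matrix n n K :=
  a • LinearMap.id + b • (traceLinearMap n K K).smulRight 1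

theorem isotropicMap_apply (a b : K) (A : Matrix n n K) :
    isotropicMap a b A = a • A + (b * A.trace) • 1 := by
  simp [isotropicMap, smul_smul]

theorem trace_isotropicMap (a b : K) (A : Matrix n n K) :
    (isotropicMap a b A).trace = (a + Fintype.card n * b) * A.trace := by
  rw [isotropicMap_apply, trace_add, trace_smul, trace_smul, trace_one, smul_eq_mul, smul_eq_mul]
  ring

theorem isotropicMap_isotropicMap (a b a' b' : K) (A : Matrix n n K) :
    isotropicMap a b (isotropicMap a' b' A) =
      isotropicMap (a * a') (a * b' + b * a' + Fintype.card n * b * b') A := by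
  simp only [isotropicMap_apply, trace_add, trace_smul, trace_one, smul_eq_mul]
  module

theorem isotropicMap_one_zero (A : Matrix n n K) : isotropicMap 1 0 A = A := by
  simp [isotropicMap_apply]

theorem IsSymm.isotropicMap {A : Matrix n n K} (hA : A.IsSymm) (a b : K) :
    (isotropicMap a b A).IsSymm := by
  rw [isotropicMap_apply]
  exact (hA.smul a).add (isSymm_one.smul _)

theorem bijOn_isotropicMap {a b : K} (ha : a ≠ 0) (hab : a + Fintype.card n * b ≠ 0) :
    Set.BijOn (isotropicMap a b) (symmetricSubmodule n K : Set (Matrix n n K))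
      (symmetricSubmodule n K) := by
  have hinv : Set.InvOn (isotropicMap a⁻¹ (-b / (a * (a + Fintype.card n * b))))
      (isotropicMap a b) (symmetricSubmodule n K : Set (Matrix n n K)) (symmetricSubmodule n K) := by
    constructor <;> intro A _ <;> rw [isotropicMap_isotropicMap] <;>
      convert isotropicMap_one_zero A using 3 <;> grind
  exact hinv.bijOn (fun A hA => hA.isotropicMap a b) (fun A hA => hA.isotropicMap _ _)

end

end Matrix

section Rescaling

variable {K V : Type*} [Field K] [AddCommGroup V] [Module K V]

theorem sub_mul_apply_inv_smul {f : V →ₗ[K] V} {τ : V →ₗ[K] K} {k : K}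
    (hτ : ∀ x, τ (f x) = k * τ x) (β : K) {x : V} (hx : 1 + β * τ x ≠ 0) :
    k - β * τ ((1 + β * τ x)⁻¹ • f x) = k * (1 + β * τ x)⁻¹ := by
  rw [map_smul, hτ, smul_eq_mul]
  field_simp
  ring

theorem bijOn_inv_one_add_mul_smul (f : V →ₗ[K] V) (τ : V →ₗ[K] K) (S : Submodule K V)
    {k : K} (hk : k ≠ 0) (hτ : ∀ x, τ (f x) = k * τ x) (hf : Set.BijOn f S S) (β : K) :
    Set.BijOn (fun x => (1 + β * τ x)⁻¹ • f x)
      {x | x ∈ S ∧ 1 + β * τ x ≠ 0} {y | y ∈ S ∧ β * τ y ≠ k} := by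
  refine ⟨?mapsTo, ?injOn, ?surjOn⟩
  case mapsTo =>
    rintro x ⟨hxS, hx⟩
    refine ⟨S.smul_mem _ (hf.mapsTo hxS), fun h => ?_⟩
    have := sub_mul_apply_inv_smul hτ β hx
    rw [h, sub_self] at this
    exact mul_ne_zero hk (inv_ne_zero hx) this.symm
  case injOn =>
    rintro x₁ ⟨hx₁S, hx₁⟩ x₂ ⟨hx₂S, hx₂⟩ heq
    have hscale : 1 + β * τ x₁ = 1 + β * τ x₂ := by
      have h₁ := sub_mul_apply_inv_smul hτ β hx₁
      have h₂ := sub_mul_apply_inv_smul hτ β hx₂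
      dsimp only at heq
      rw [heq, h₂, mul_right_inj' hk, _root_.inv_inj] at h₁
      exact h₁.symm
    simp only [hscale] at heq
    exact hf.injOn hx₁S hx₂S (smul_right_injective V (inv_ne_zero hx₂) heq)
  case surjOn =>
    rintro y ⟨hyS, hy⟩
    obtain ⟨x₀, hx₀S, rfl⟩ := hf.surjOn hyS
    rw [hτ] at hy
    set c := 1 - β * τ x₀
    have hc : c ≠ 0 := fun h => hy (by linear_combination -k * h)
    have hscale : 1 + β * τ (c⁻¹ • x₀) = c⁻¹ := by
      rw [map_smul, smul_eq_mul]
      field_simp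
      ring
    refine ⟨c⁻¹ • x₀, ⟨S.smul_mem _ hx₀S, by rw [hscale]; exact inv_ne_zero hc⟩, ?_⟩
    dsimp only
    rw [hscale, inv_inv, map_smul, smul_smul, mul_inv_cancel₀ hc, one_smul]

end Rescaling

theorem elasticityTensor_eq_isotropicMap (E ν : ℝ) :
    elasticityTensor E ν = isotropicMap (E / (1 + ν)) (ν * E / ((1 - 2 * ν) * (1 + ν))) := by
  ext1 ε
  rw [isotropicMap_apply, elasticityTensor]

/-- For `E > 0`, `ν ∈ (−1, 1/2)` and `β ∈ ℝ`, the stress map `ε ↦ 𝔼[ε]/(1 + β tr ε)` is a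
bijection from `{ε symmetric : 1 + β tr ε ≠ 0}` onto `{T symmetric : β(1−2ν) tr T ≠ E}`. -/
theorem stress_map_bijective (E ν β : ℝ) (hE : 0 < E) (hν₁ : -1 < ν) (hν₂ : ν < 1 / 2) :
    Set.BijOn (fun ε : Matrix (Fin 3) (Fin 3) ℝ => (1 + β * ε.trace)⁻¹ • elasticityTensor E ν ε)
      {ε : Matrix (Fin 3) (Fin 3) ℝ | ε.IsSymm ∧ 1 + β * ε.trace ≠ 0}
      {T : Matrix (Fin 3) (Fin 3) ℝ | T.IsSymm ∧ β * (1 - 2 * ν) * T.trace ≠ E} := by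
  have h1ν : 1 + ν ≠ 0 := by linarith
  have h2ν : 0 < 1 - 2 * ν := by linarith
  have hk : E / (1 - 2 * ν) ≠ 0 := (div_pos hE h2ν).ne'
  have hbulk : E / (1 + ν) + (Fintype.card (Fin 3) : ℝ) * (ν * E / ((1 - 2 * ν) * (1 + ν))) =
      E / (1 - 2 * ν) := by
    have h12 : (1 - 2 * ν) * (1 + ν) ≠ 0 := mul_ne_zero h2ν.ne' h1ν
    rw [Fintype.card_fin, mul_div_assoc', div_add_div _ _ h1ν h12,
      div_eq_div_iff (mul_ne_zero h1ν h12) h2ν.ne']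
    push_cast
    ring
  have htarget : {T : Matrix (Fin 3) (Fin 3) ℝ | T.IsSymm ∧ β * (1 - 2 * ν) * T.trace ≠ E} =
      {T | T.IsSymm ∧ β * T.trace ≠ E / (1 - 2 * ν)} := by
    ext T
    exact and_congr_right fun _ => by rw [ne_eq, ne_eq, eq_div_iff h2ν.ne', mul_right_comm]
  rw [htarget, elasticityTensor_eq_isotropicMap]
  refine bijOn_inv_one_add_mul_smul _ (traceLinearMap (Fin 3) ℝ ℝ) (symmetricSubmodule (Fin 3) ℝ)
    hk (fun ε => ?_) (bijOn_isotropicMap (div_ne_zero hE.ne' h1ν) (hbulk ▸ hk)) β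
  rw [traceLinearMap_apply, traceLinearMap_apply, trace_isotropicMap, hbulk]
end

section
/- Nonnegativity of the strain energy density for the density-dependent model: let E > 0, ν ∈ [0, 1/2), β ∈ ℝ, and let ε be a real symmetric 3×3 matrix with 1 + β tr ε > 0. Then the Cauchy stress T = 𝔼[ε]/(1 + β tr ε) satisfies the strain-energy-density bound ε : T ≥ (E/((1+ν)(1 + β tr ε))) ‖ε‖² ≥ 0, with ε : T = 0 if and only if ε = 0. -/
open Matrix

/-- Frobenius inner product `M : N = Σ_{i,j} M_{ij} N_{ij}`. -/
def matInner (M N : Matrix (Fin 3) (Fin 3) ℝ) : ℝ := ∑ i, ∑ j, M i j * N i j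

/-- Frobenius norm of a real `3 × 3` matrix. -/
noncomputable def frobNorm (M : Matrix (Fin 3) (Fin 3) ℝ) : ℝ :=
  Real.sqrt (matInner M M)

/-! The energy `ε : 𝔼[ε] = (E/(1+ν)) ‖ε‖² + (ν E/((1−2ν)(1+ν))) (tr ε)²` is a sum of a positive
multiple of `‖ε‖²` and, for `0 ≤ ν < 1/2`, a nonnegative multiple of `(tr ε)²`; dividing by the
positive density factor `1 + β tr ε` preserves both the bound and the equality case. -/

section matInner

variable (M N P : Matrix (Fin 3) (Fin 3) ℝ)

lemma matInner_add_right : matInner M (N + P) = matInner M N + matInner M P := by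
  simp only [matInner, Matrix.add_apply, mul_add, Finset.sum_add_distrib]

lemma matInner_smul_right (c : ℝ) : matInner M (c • N) = c * matInner M N := by
  simp only [matInner, Matrix.smul_apply, smul_eq_mul, Finset.mul_sum]
  exact Finset.sum_congr rfl fun _ _ => Finset.sum_congr rfl fun _ _ => by ring

lemma matInner_one_right : matInner M 1 = M.trace := by
  simp [matInner, one_apply, trace]

lemma matInner_self_nonneg : 0 ≤ matInner M M :=
  Finset.sum_nonneg fun _ _ => Finset.sum_nonneg fun _ _ => mul_self_nonneg _

variable {M} in
lemma matInner_self_eq_zero_iff : matInner M M = 0 ↔ M = 0 := by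
  refine ⟨fun h => ?_, by rintro rfl; simp [matInner]⟩
  have hrows := (Fintype.sum_eq_zero_iff_of_nonneg
    fun i => Finset.sum_nonneg fun j _ => mul_self_nonneg (M i j)).mp h
  ext i j
  have hrow := (Fintype.sum_eq_zero_iff_of_nonneg
    fun j => mul_self_nonneg (M i j)).mp (congrFun hrows i)
  exact mul_self_eq_zero.mp (congrFun hrow j)

lemma frobNorm_sq : frobNorm M ^ 2 = matInner M M :=
  Real.sq_sqrt (matInner_self_nonneg M)

end matInner

section elasticityTensor

variable {E ν : ℝ} (ε : Matrix (Fin 3) (Fin 3) ℝ)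

lemma matInner_elasticityTensor :
    matInner ε (elasticityTensor E ν ε) =
      E / (1 + ν) * matInner ε ε + ν * E / ((1 - 2 * ν) * (1 + ν)) * ε.trace ^ 2 := by
  rw [elasticityTensor, matInner_add_right, matInner_smul_right, matInner_smul_right,
    matInner_one_right]
  ring

lemma le_matInner_elasticityTensor (hE : 0 ≤ E) (hν₁ : 0 ≤ ν) (hν₂ : ν < 1 / 2) :
    E / (1 + ν) * matInner ε ε ≤ matInner ε (elasticityTensor E ν ε) := by
  have hν : 0 < 1 - 2 * ν := by linarith
  rw [matInner_elasticityTensor]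
  have : 0 ≤ ν * E / ((1 - 2 * ν) * (1 + ν)) * ε.trace ^ 2 := by positivity
  linarith

lemma matInner_elasticityTensor_eq_zero_iff (hE : 0 < E) (hν₁ : 0 ≤ ν) (hν₂ : ν < 1 / 2) :
    matInner ε (elasticityTensor E ν ε) = 0 ↔ ε = 0 := by
  refine ⟨fun h => matInner_self_eq_zero_iff.mp (le_antisymm ?_ (matInner_self_nonneg ε)), ?_⟩
  · have hle := le_matInner_elasticityTensor ε hE.le hν₁ hν₂
    rw [h] at hle
    exact nonpos_of_mul_nonpos_right hle (by positivity)
  · rintro rfl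
    simp [matInner]

end elasticityTensor

theorem strain_energy_density_nonneg_general (E ν β : ℝ) (hE : 0 < E) (hν₁ : 0 ≤ ν) (hν₂ : ν < 1 / 2)
    (ε : Matrix (Fin 3) (Fin 3) ℝ) (hden : 0 < 1 + β * ε.trace) :
    matInner ε ((1 + β * ε.trace)⁻¹ • elasticityTensor E ν ε) ≥
      (E / ((1 + ν) * (1 + β * ε.trace))) * frobNorm ε ^ 2 ∧
    (E / ((1 + ν) * (1 + β * ε.trace))) * frobNorm ε ^ 2 ≥ 0 ∧
    (matInner ε ((1 + β * ε.trace)⁻¹ • elasticityTensor E ν ε) = 0 ↔ ε = 0) := by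
  set d := 1 + β * ε.trace
  have hd : 0 < d⁻¹ := inv_pos.mpr hden
  have hcoeff : E / ((1 + ν) * d) * frobNorm ε ^ 2 = d⁻¹ * (E / (1 + ν) * matInner ε ε) := by
    rw [frobNorm_sq]
    field_simp
  rw [matInner_smul_right, hcoeff]
  refine ⟨?_, ?_, ?_⟩
  · exact mul_le_mul_of_nonneg_left (le_matInner_elasticityTensor ε hE.le hν₁ hν₂) hd.le
  · have := matInner_self_nonneg ε
    have : 0 < 1 + ν := by linarith
    positivity
  · rw [mul_eq_zero, or_iff_right hd.ne']
    exact matInner_elasticityTensor_eq_zero_iff ε hE hν₁ hν₂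

/-- Nonnegativity of the strain energy density for the density-dependent model: for `E > 0`,
`ν ∈ [0, 1/2)`, `β ∈ ℝ` and a real symmetric `3 × 3` matrix `ε` with `1 + β tr ε > 0`, the
Cauchy stress `T = 𝔼[ε]/(1 + β tr ε)` satisfies
`ε : T ≥ (E/((1+ν)(1 + β tr ε))) ‖ε‖² ≥ 0`, with `ε : T = 0` iff `ε = 0`. -/
theorem strain_energy_density_nonneg (E ν β : ℝ) (hE : 0 < E) (hν₁ : 0 ≤ ν) (hν₂ : ν < 1 / 2)
    (ε : Matrix (Fin 3) (Fin 3) ℝ) (hε : ε.IsSymm) (hden : 0 < 1 + β * ε.trace) :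
    matInner ε ((1 + β * ε.trace)⁻¹ • elasticityTensor E ν ε) ≥
      (E / ((1 + ν) * (1 + β * ε.trace))) * frobNorm ε ^ 2 ∧
    (E / ((1 + ν) * (1 + β * ε.trace))) * frobNorm ε ^ 2 ≥ 0 ∧
    (matInner ε ((1 + β * ε.trace)⁻¹ • elasticityTensor E ν ε) = 0 ↔ ε = 0) :=
  strain_energy_density_nonneg_general E ν β hE hν₁ hν₂ ε hden
end
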